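/- Let n ≥ 3 be an integer, p ≥ 1, and λ > 0. With f, G, V_p as defined below, G is a strictly decreasing bijection from (0,1) onto (0,∞); let G⁻¹ : (0,∞) → (0,1) denote its inverse. For a measurable function u : (0,1) → ℝ define its hyperbolic rescaling u_λ(r) = λ^{−1/2} u(G⁻¹(λ G(r))). Then the Lebesgue integrals (with values in [0,∞]) satisfy ∫₀¹ V_p(r) |u_λ(r)|^p (2/(1−r²))ⁿ r^{n−1} dr = ∫₀¹ V_p(r) |u(r)|^p (2/(1−r²))ⁿ r^{n−1} dr. (This is the invariance ∫_{𝔹ⁿ} V_p|u_λ|^p dv_{g_{𝔹ⁿ}} = ∫_{𝔹ⁿ} V_p|u|^p dv_{g_{𝔹ⁿ}} for radial functions on the Poincaré ball, written in polar coordinates up to the constant factor n·ω_{n−1}.) -/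

import Mathlib

open Real Filter Set MeasureTheory

noncomputable def f (n : ℕ) (r : ℝ) : ℝ := (1 - r ^ 2) ^ (n - 2) / r ^ (n - 1)

noncomputable def G (n : ℕ) (r : ℝ) : ℝ := ∫ t in r..(1 : ℝ), f n t

noncomputable def V (n : ℕ) (p r : ℝ) : ℝ :=
  f n r ^ 2 * (1 - r ^ 2) ^ 2 / (4 * ((n : ℝ) - 2) ^ 2 * G n r ^ ((p + 2) / 2))

/-!
On `(0,1)` the weight `V_p(r) (2/(1-r²))ⁿ r^{n-1}` equals `f(r) W(G(r))` with
`W(s) = 2ⁿ / (4(n-2)² s^{(p+2)/2})`. Since `G' = -f`, the substitution `s = G(r)` turns both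
integrals into integrals `∫₀^∞ W(s) |v(s)|^p ds`, with `v = u ∘ G⁻¹` on the right and
`v(s) = λ^{-1/2} u(G⁻¹(λ s))` on the left. The dilation `s ↦ λ s` maps one to the other,
because `W` is homogeneous of degree `-(p+2)/2` and `λ · λ^{-(p+2)/2} = (λ^{-1/2})^p`.
That `G` is onto `(0,∞)` follows from `G(1) = 0` and `f(r) ≥ (3/4)^{n-2}/r` near `0`.
-/

open scoped Topology ENNReal

noncomputable def W (n : ℕ) (p s : ℝ) : ℝ :=
  2 ^ n / (4 * ((n : ℝ) - 2) ^ 2 * s ^ ((p + 2) / 2))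

section
variable {n : ℕ} {p r : ℝ}

lemma f_pos (h0 : 0 < r) (h1 : r < 1) : 0 < f n r := by
  have : 0 < 1 - r ^ 2 := by nlinarith
  unfold f; positivity

lemma continuousOn_f : ContinuousOn (f n) (Ioi 0) :=
  ContinuousOn.div (by fun_prop) (by fun_prop) fun _ hr => pow_ne_zero _ (ne_of_gt hr)

lemma intervalIntegrable_f {a b : ℝ} (ha : 0 < a) (hb : 0 < b) :
    IntervalIntegrable (f n) volume a b :=
  continuousOn_f.mono (fun _ hx => lt_min ha hb |>.trans_le hx.1) |>.intervalIntegrable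

lemma hasDerivAt_G (hr : 0 < r) : HasDerivAt (G n) (-f n r) r :=
  intervalIntegral.integral_hasDerivAt_left (intervalIntegrable_f hr one_pos)
    (continuousOn_f.stronglyMeasurableAtFilter isOpen_Ioi r hr)
    (continuousOn_f.continuousAt (Ioi_mem_nhds hr))

lemma G_pos (h0 : 0 < r) (h1 : r < 1) : 0 < G n r :=
  intervalIntegral.intervalIntegral_pos_of_pos_on (intervalIntegrable_f h0 one_pos)
    (fun _ ht => f_pos (h0.trans ht.1) ht.2) h1

lemma continuousOn_G : ContinuousOn (G n) (Ioi 0) :=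
  fun _ hr => (hasDerivAt_G hr).continuousAt.continuousWithinAt

lemma G_strictAntiOn : StrictAntiOn (G n) (Ioo 0 1) :=
  strictAntiOn_of_hasDerivWithinAt_neg (convex_Ioo 0 1) (continuousOn_G.mono fun _ hr => hr.1)
    (fun _ hr => (hasDerivAt_G (interior_subset hr).1).hasDerivWithinAt)
    (fun _ hr => neg_neg_of_pos (f_pos (interior_subset hr).1 (interior_subset hr).2))

lemma tendsto_G_nhdsLT_one : Tendsto (G n) (𝓝[<] 1) (𝓝 0) := by
  have h := (hasDerivAt_G (n := n) one_pos).continuousAt.tendsto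
  rw [G, intervalIntegral.integral_same] at h
  exact h.mono_left nhdsWithin_le_nhds

lemma inv_le_f (hn : 2 ≤ n) (h0 : 0 < r) (h : r ≤ 1 / 2) :
    (3 / 4) ^ (n - 2) * r⁻¹ ≤ f n r := by
  rw [← div_eq_mul_inv]
  have hq : 3 / 4 ≤ 1 - r ^ 2 := by nlinarith
  exact div_le_div₀ (pow_nonneg (by linarith) _) (pow_le_pow_left₀ (by norm_num) hq _)
    (pow_pos h0 _) (pow_le_of_le_one h0.le (by linarith) (by omega))

lemma log_le_G (hn : 2 ≤ n) (h0 : 0 < r) (h : r ≤ 1 / 2) :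
    (3 / 4) ^ (n - 2) * log (1 / 2 / r) ≤ G n r := calc
  (3 / 4) ^ (n - 2) * log (1 / 2 / r) = ∫ t in r..1 / 2, (3 / 4) ^ (n - 2) * t⁻¹ := by
    rw [intervalIntegral.integral_const_mul, integral_inv_of_pos h0 (by norm_num)]
  _ ≤ ∫ t in r..1 / 2, f n t :=
    intervalIntegral.integral_mono_on h
      ((intervalIntegral.intervalIntegrable_inv (fun _ ht => by
        rw [uIcc_of_le h] at ht; exact (h0.trans_le ht.1).ne') continuousOn_id).const_mul _)
      (intervalIntegrable_f h0 (by norm_num)) fun t ht => inv_le_f hn (h0.trans_le ht.1) ht.2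
  _ ≤ G n r := by
    rw [G, ← intervalIntegral.integral_add_adjacent_intervals
      (intervalIntegrable_f h0 one_half_pos) (intervalIntegrable_f one_half_pos one_pos)]
    exact le_add_of_nonneg_right (G_pos one_half_pos one_half_lt_one).le

lemma tendsto_G_nhdsGT_zero (hn : 2 ≤ n) : Tendsto (G n) (𝓝[>] 0) atTop := by
  have hlog : Tendsto (fun r : ℝ => (3 / 4) ^ (n - 2) * log (1 / 2 / r)) (𝓝[>] 0) atTop :=
    (tendsto_log_atTop.comp (tendsto_inv_nhdsGT_zero.const_mul_atTop one_half_pos)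
      ).const_mul_atTop (by positivity)
  refine tendsto_atTop_mono' _ ?_ hlog
  filter_upwards [Ioo_mem_nhdsGT one_half_pos] with r hr using log_le_G hn hr.1 hr.2.le

lemma G_bijOn (hn : 2 ≤ n) : BijOn (G n) (Ioo 0 1) (Ioi 0) :=
  ⟨fun _ hr => G_pos hr.1 hr.2, G_strictAntiOn.injOn,
    isPreconnected_Ioo.intermediate_value_Ioi (le_principal_iff.2 (Ioo_mem_nhdsLT one_pos))
      (le_principal_iff.2 (Ioo_mem_nhdsGT one_pos)) (continuousOn_G.mono fun _ hr => hr.1)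
      tendsto_G_nhdsLT_one (tendsto_G_nhdsGT_zero hn)⟩

lemma V_mul_hyperbolic_density (hn : 2 ≤ n) (h0 : 0 < r) (h1 : r < 1) :
    V n p r * (2 / (1 - r ^ 2)) ^ n * r ^ (n - 1) = f n r * W n p (G n r) := by
  have hq : 1 - r ^ 2 ≠ 0 := by nlinarith
  have hfr : f n r * r ^ (n - 1) = (1 - r ^ 2) ^ (n - 2) :=
    div_mul_cancel₀ _ (pow_ne_zero _ h0.ne')
  have hqn : (1 - r ^ 2) ^ (n - 2) * (1 - r ^ 2) ^ 2 = (1 - r ^ 2) ^ n := by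
    rw [← pow_add, Nat.sub_add_cancel hn]
  set D := 4 * ((n : ℝ) - 2) ^ 2 * G n r ^ ((p + 2) / 2)
  calc V n p r * (2 / (1 - r ^ 2)) ^ n * r ^ (n - 1)
      = f n r * (f n r * r ^ (n - 1) * (1 - r ^ 2) ^ 2 * (2 ^ n / (1 - r ^ 2) ^ n)) / D := by
        rw [V, div_pow]; ring
    _ = f n r * W n p (G n r) := by
        have h2q : (1 - r ^ 2) ^ n * (2 ^ n / (1 - r ^ 2) ^ n) = 2 ^ n := by field_simp
        rw [hfr, hqn, h2q, mul_div_assoc, W]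

lemma W_const_mul {lam s : ℝ} (hlam : 0 < lam) (hs : 0 < s) :
    W n p (lam * s) = lam ^ (-((p + 2) / 2)) * W n p s := by
  rw [W, W, mul_rpow hlam.le hs.le, rpow_neg hlam.le]
  have : lam ^ ((p + 2) / 2) ≠ 0 := (rpow_pos_of_pos hlam _).ne'
  field_simp

lemma lintegral_comp_G (hn : 2 ≤ n) (h : ℝ → ℝ≥0∞) :
    ∫⁻ r in Ioo 0 1, ENNReal.ofReal (f n r) * h (G n r) = ∫⁻ s in Ioi 0, h s := by
  rw [← (G_bijOn hn).image_eq, lintegral_image_eq_lintegral_abs_deriv_mul measurableSet_Ioo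
    (fun r hr => (hasDerivAt_G hr.1).hasDerivWithinAt) G_strictAntiOn.injOn]
  refine setLIntegral_congr_fun measurableSet_Ioo fun r hr => ?_
  rw [abs_neg, abs_of_pos (f_pos hr.1 hr.2)]

lemma lintegral_comp_mul_left_Ioi_zero {c : ℝ} (hc : 0 < c) (h : ℝ → ℝ≥0∞) :
    ∫⁻ s in Ioi 0, ENNReal.ofReal c * h (c * s) = ∫⁻ s in Ioi 0, h s := by
  conv_rhs => rw [← image_const_mul_Ioi_zero hc]
  rw [lintegral_image_eq_lintegral_abs_deriv_mul measurableSet_Ioi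
    (fun s _ => ((hasDerivAt_id' s).const_mul c).hasDerivWithinAt)
    (mul_right_injective₀ hc.ne').injOn]
  simp only [mul_one, abs_of_pos hc]

lemma lintegral_V_eq_lintegral_W (hn : 2 ≤ n) (v : ℝ → ℝ) :
    ∫⁻ r in Ioo 0 1,
        ENNReal.ofReal (V n p r * |v (G n r)| ^ p * (2 / (1 - r ^ 2)) ^ n * r ^ (n - 1)) =
      ∫⁻ s in Ioi 0, ENNReal.ofReal (W n p s * |v s| ^ p) := by
  rw [← lintegral_comp_G hn]
  refine setLIntegral_congr_fun measurableSet_Ioo fun r hr => ?_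
  rw [← ENNReal.ofReal_mul (f_pos hr.1 hr.2).le, ← mul_assoc,
    ← V_mul_hyperbolic_density hn hr.1 hr.2]
  congr 1
  ring

lemma lintegral_W_rescale {lam : ℝ} (hlam : 0 < lam) (v : ℝ → ℝ) :
    ∫⁻ s in Ioi 0, ENNReal.ofReal (W n p s * |lam ^ (-(1 : ℝ) / 2) * v (lam * s)| ^ p) =
      ∫⁻ s in Ioi 0, ENNReal.ofReal (W n p s * |v s| ^ p) := by
  conv_rhs => rw [← lintegral_comp_mul_left_Ioi_zero hlam]
  refine setLIntegral_congr_fun measurableSet_Ioi fun s hs => ?_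
  have hpow : lam ^ (-(1 : ℝ) / 2 * p) = lam * lam ^ (-((p + 2) / 2)) := by
    rw [show -(1 : ℝ) / 2 * p = 1 + -((p + 2) / 2) by ring, rpow_add hlam, rpow_one]
  rw [← ENNReal.ofReal_mul hlam.le, W_const_mul hlam hs, abs_mul,
    mul_rpow (abs_nonneg _) (abs_nonneg _), abs_of_pos (rpow_pos_of_pos hlam _),
    ← rpow_mul hlam.le, hpow]
  congr 1
  ring

end

theorem stmt_4_general (n : ℕ) (hn : 3 ≤ n) (p : ℝ) (lam : ℝ) (hlam : 0 < lam) :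
    StrictAntiOn (G n) (Set.Ioo 0 1) ∧ Set.BijOn (G n) (Set.Ioo 0 1) (Set.Ioi 0) ∧
    ∀ Ginv : ℝ → ℝ, Set.InvOn Ginv (G n) (Set.Ioo 0 1) (Set.Ioi 0) →
      ∀ u : ℝ → ℝ, Measurable u →
        ∫⁻ r in Set.Ioo (0 : ℝ) 1,
            ENNReal.ofReal (V n p r * |lam ^ (-(1 : ℝ) / 2) * u (Ginv (lam * G n r))| ^ p *
              (2 / (1 - r ^ 2)) ^ n * r ^ (n - 1)) =
        ∫⁻ r in Set.Ioo (0 : ℝ) 1,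
            ENNReal.ofReal (V n p r * |u r| ^ p * (2 / (1 - r ^ 2)) ^ n * r ^ (n - 1)) := by
  refine ⟨G_strictAntiOn, G_bijOn (by omega), fun Ginv hinv u _ => ?_⟩
  calc _ = ∫⁻ s in Ioi 0,
          ENNReal.ofReal (W n p s * |lam ^ (-(1 : ℝ) / 2) * u (Ginv (lam * s))| ^ p) :=
        lintegral_V_eq_lintegral_W (by omega) fun s => lam ^ (-(1 : ℝ) / 2) * u (Ginv (lam * s))
    _ = ∫⁻ s in Ioi 0, ENNReal.ofReal (W n p s * |u (Ginv s)| ^ p) :=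
        lintegral_W_rescale hlam (u ∘ Ginv)
    _ = _ := by
        rw [← lintegral_V_eq_lintegral_W (by omega)]
        exact setLIntegral_congr_fun measurableSet_Ioo fun r hr => by rw [hinv.1 hr]

/-- `G` is a strictly decreasing bijection from `(0,1)` onto `(0,∞)`, and for any
inverse `G⁻¹` of it, any `λ > 0`, `p ≥ 1` and any measurable `u`, the hyperbolic rescaling
`u_λ(r) = λ^{-1/2} u(G⁻¹(λ G(r)))` satisfies
`∫₀¹ V_p |u_λ|^p (2/(1-r²))ⁿ r^{n-1} dr = ∫₀¹ V_p |u|^p (2/(1-r²))ⁿ r^{n-1} dr`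
(as Lebesgue integrals with values in `[0,∞]`). -/
theorem stmt_4 (n : ℕ) (hn : 3 ≤ n) (p : ℝ) (hp : 1 ≤ p) (lam : ℝ) (hlam : 0 < lam) :
    StrictAntiOn (G n) (Set.Ioo 0 1) ∧ Set.BijOn (G n) (Set.Ioo 0 1) (Set.Ioi 0) ∧
    ∀ Ginv : ℝ → ℝ, Set.InvOn Ginv (G n) (Set.Ioo 0 1) (Set.Ioi 0) →
      ∀ u : ℝ → ℝ, Measurable u →
        ∫⁻ r in Set.Ioo (0 : ℝ) 1,
            ENNReal.ofReal (V n p r * |lam ^ (-(1 : ℝ) / 2) * u (Ginv (lam * G n r))| ^ p *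
              (2 / (1 - r ^ 2)) ^ n * r ^ (n - 1)) =
        ∫⁻ r in Set.Ioo (0 : ℝ) 1,
            ENNReal.ofReal (V n p r * |u r| ^ p * (2 / (1 - r ^ 2)) ^ n * r ^ (n - 1)) :=
  stmt_4_general n hn p lam hlam
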